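/- Let t ≥ 1 and k = 2t, and suppose Φ_1, …, Φ_{2t} and S_1, …, S_{2t} satisfy the (r = 2) subspace conditions. For p, q in {1,…,t} let Π_{p,q} denote the composition applying Φ_{2p−1} first and then Φ_{2q} (the paper's product Φ_{2p−1}Φ_{2q}). If S_{2p−1} ∩ S_{2q} ≠ {0} for every p, q in {1,…,t}, then the t² endomorphisms Π_{p,q}, (p,q) ∈ {1,…,t}², are linearly independent over F. -/

import Mathlib

/-!
Suppose `∑ g_{pq} Φ_{b_q} Φ_{a_p} = 0`, fix `(p₀, q₀)` and evaluate at a nonzero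
`v ∈ S_{a_{p₀}} ∩ S_{b_{q₀}}`. Every `Φ_j` with `j ≠ i` fixes `S_i`, so the terms with `q ≠ q₀`
lie in `S_{b_{q₀}}` while those with `q = q₀` lie in `Φ_{b_{q₀}}(S_{b_{q₀}})`; these meet trivially,
so the row `q = q₀` sums to zero. In that row the terms with `p ≠ p₀` lie in `S_{a_{p₀}}`, hence so
does `g_{p₀q₀} Φ_{b_{q₀}} Φ_{a_{p₀}} v`. Pulling back along `Φ_{b_{q₀}}` puts `g_{p₀q₀} Φ_{a_{p₀}} v`
in `Φ_{a_{p₀}}(S_{a_{p₀}}) ∩ S_{a_{p₀}} = 0`, so `g_{p₀q₀} = 0`.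
-/

open Finset Submodule

theorem Submodule.apply_mem_iff_of_map_eq {R M : Type*} [Semiring R] [AddCommMonoid M]
    [Module R M] {e : M ≃ₗ[R] M} {S : Submodule R M} (h : S.map (e : M →ₗ[R] M) = S) {x : M} :
    e x ∈ S ↔ x ∈ S := by
  conv_lhs => rw [← h]
  rw [mem_map_equiv, LinearEquiv.symm_apply_apply]

theorem Submodule.eq_zero_of_add_eq_zero_of_inf_eq_bot {R M : Type*} [Ring R] [AddCommGroup M]
    [Module R M] {P Q : Submodule R M} (hPQ : P ⊓ Q = ⊥) {x y : M} (hxy : x + y = 0)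
    (hx : x ∈ P) (hy : y ∈ Q) : x = 0 := by
  have hxQ : x ∈ Q := eq_neg_of_add_eq_zero_left hxy ▸ Q.neg_mem hy
  exact (mem_bot R).1 (hPQ ▸ ⟨hx, hxQ⟩)

theorem linearIndependent_comp_of_inf_ne_bot {F V ι α β : Type*} [Field F] [AddCommGroup V]
    [Module F V] (Φ : ι → V ≃ₗ[F] V) (S : ι → Submodule F V)
    (h1 : ∀ i j, i ≠ j → (S i).map (Φ j : V →ₗ[F] V) = S i)
    (h2 : ∀ i, (S i).map (Φ i : V →ₗ[F] V) ⊓ S i = ⊥)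
    {a : α → ι} {b : β → ι} (ha : a.Injective) (hb : b.Injective) (hab : ∀ p q, a p ≠ b q)
    (hint : ∀ p q, S (a p) ⊓ S (b q) ≠ ⊥) :
    LinearIndependent F fun pq : α × β =>
      (Φ (b pq.2) : V →ₗ[F] V) ∘ₗ (Φ (a pq.1) : V →ₗ[F] V) := by
  classical
  rw [linearIndependent_iff']
  rintro s g hg ⟨p₀, q₀⟩ hmem
  obtain ⟨v, ⟨hva, hvb⟩, hv0⟩ := exists_mem_ne_zero_of_ne_bot (hint p₀ q₀)
  have mem_iff {i j} (hij : i ≠ j) (x : V) : Φ j x ∈ S i ↔ x ∈ S i :=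
    apply_mem_iff_of_map_eq (h1 i j hij)
  set T : α × β → V := fun pq => Φ (b pq.2) (Φ (a pq.1) v)
  have hsum : ∑ pq ∈ s, g pq • T pq = 0 := by simpa using congr($hg v)
  have hvb' (p : α) : Φ (a p) v ∈ S (b q₀) := (mem_iff (hab p q₀).symm v).2 hvb
  have hrow : ∑ pq ∈ s.filter (·.2 = q₀), g pq • T pq = 0 := by
    refine eq_zero_of_add_eq_zero_of_inf_eq_bot (h2 (b q₀))
      ((sum_filter_add_sum_filter_not s _ _).trans hsum)
      (sum_mem fun pq h => smul_mem _ _ ?_) (sum_mem fun pq h => smul_mem _ _ ?_)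
    · show Φ (b pq.2) _ ∈ _
      rw [(mem_filter.1 h).2]
      exact mem_map_of_mem (hvb' _)
    · exact (mem_iff (fun h' => (mem_filter.1 h).2 (hb h').symm) _).2 (hvb' _)
  have hrest : ∑ pq ∈ (s.filter (·.2 = q₀)).erase (p₀, q₀), g pq • T pq ∈ S (a p₀) := by
    refine sum_mem fun ⟨p, q⟩ h => smul_mem _ _ ?_
    obtain ⟨hne, -, rfl : q = q₀⟩ := by simpa only [mem_erase, mem_filter] using h
    have hp : a p₀ ≠ a p := fun h' => hne (by rw [ha h'])
    exact (mem_iff (hab p₀ q) _).2 ((mem_iff hp v).2 hva)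
  have hmain : g (p₀, q₀) • T (p₀, q₀) ∈ S (a p₀) := by
    rw [← add_sum_erase (s.filter (·.2 = q₀)) (fun pq => g pq • T pq)
      (mem_filter.2 ⟨hmem, rfl⟩)] at hrow
    exact (Submodule.add_mem_iff_left _ hrest).1 (hrow ▸ zero_mem _)
  have hker : g (p₀, q₀) • Φ (a p₀) v ∈ (S (a p₀)).map (Φ (a p₀) : V →ₗ[F] V) ⊓ S (a p₀) :=
    ⟨smul_mem _ _ (mem_map_of_mem hva),
      (mem_iff (hab p₀ q₀) _).1 (by simpa only [T, map_smul] using hmain)⟩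
  rw [h2, mem_bot, smul_eq_zero] at hker
  exact hker.resolve_right (by simpa using hv0)

/-- Under the (r = 2) subspace conditions for `Φ₁, …, Φ_{2t}` and
`S₁, …, S_{2t}`, if `S_{2p−1} ∩ S_{2q} ≠ {0}` for every `p, q ∈ {1,…,t}`, then the `t²`
compositions `Π_{p,q}` (apply `Φ_{2p−1}` first, then `Φ_{2q}`) are linearly independent. -/
theorem stmt2 (F : Type*) [Field F] (V : Type*) [AddCommGroup V] [Module F V]
    (t : ℕ)
    (Φ : Fin (2 * t) → V ≃ₗ[F] V) (S : Fin (2 * t) → Submodule F V)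
    (h1 : ∀ i j : Fin (2 * t), i ≠ j → (S i).map (Φ j : V →ₗ[F] V) = S i)
    (h2 : ∀ i : Fin (2 * t), (S i).map (Φ i : V →ₗ[F] V) ⊓ S i = ⊥)
    (Pi : Fin t → Fin t → Module.End F V)
    (hPi : ∀ p q : Fin t, Pi p q =
      ((Φ ⟨2 * q.val + 1, by omega⟩ : V →ₗ[F] V)) ∘ₗ ((Φ ⟨2 * p.val, by omega⟩ : V →ₗ[F] V)))
    (hint : ∀ p q : Fin t,
      S ⟨2 * p.val, by omega⟩ ⊓ S ⟨2 * q.val + 1, by omega⟩ ≠ ⊥) :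
    LinearIndependent F (fun pq : Fin t × Fin t => Pi pq.1 pq.2) := by
  simp only [hPi]
  exact linearIndependent_comp_of_inf_ne_bot Φ S h1 h2
    (a := fun p : Fin t => ⟨2 * p.val, by omega⟩) (b := fun q : Fin t => ⟨2 * q.val + 1, by omega⟩)
    (fun p p' h => Fin.ext (by simpa using congrArg Fin.val h))
    (fun q q' h => Fin.ext (by simpa using congrArg Fin.val h))
    (fun p q h => by have := congrArg Fin.val h; simp only at this; omega) hint
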